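/- arXiv:1707.09276 — 2 statements merged into one kernel-verified Lean document; each statement's English description precedes it below -/
import Mathlib

section
/- For every integer m ≥ 0 there exist finite positive constants c and C₀ (depending only on m) such that for every integer n ≥ 1 and every real N > 0, P( sup_{y ∈ I_n} e^{−y²/2} |P_n^{(m)}(y)| > N n^{m/2} ) ≤ C₀ n e^{−c N²}, where I_n = [−n^{1/2} + n^{1/6} log n, n^{1/2} − n^{1/6} log n] and P_n^{(m)} denotes the m-th derivative of the Weyl polynomial P_n. -/
open MeasureTheory ProbabilityTheory Real Filter Topology
open scoped BigOperators Classical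

noncomputable section

/-- The Weyl polynomial `P_n(x) = ∑_{k=0}^n ξ_k x^k / √(k!)` as a `Polynomial ℝ`. -/
def weylPoly {Ω : Type*} (ξ : ℕ → Ω → ℝ) (n : ℕ) (ω : Ω) : Polynomial ℝ :=
  ∑ k ∈ Finset.range (n + 1),
    Polynomial.C (ξ k ω / Real.sqrt (Nat.factorial k)) * Polynomial.X ^ k

/-- The Weyl series `P_∞(x) = ∑_{k=0}^∞ ξ_k x^k / √(k!)`. -/
def weylSeries {Ω : Type*} (ξ : ℕ → Ω → ℝ) (ω : Ω) (x : ℝ) : ℝ :=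
  ∑' k : ℕ, ξ k ω * x ^ k / Real.sqrt (Nat.factorial k)

/-- Covariance of the 2-jet of the Weyl series at points `s`, `t`:
`weylCov s t a b = E[P_∞^{(a)}(s) P_∞^{(b)}(t)]` for `a b : Fin 2`,
computed from the covariance kernel `E[P_∞(s)P_∞(t)] = e^{st}`. -/
def weylCov (s t : ℝ) (a b : Fin 2) : ℝ :=
  (if a = 0 then (if b = 0 then 1 else s) else (if b = 0 then t else 1 + s * t)) *
    Real.exp (s * t)

/-- The covariance matrix `Γ` of `(P_∞(x_1), P_∞'(x_1), …, P_∞(x_k), P_∞'(x_k))`. -/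
def weylGamma {k : ℕ} (x : Fin k → ℝ) :
    Matrix (Fin k × Fin 2) (Fin k × Fin 2) ℝ :=
  fun p q => weylCov (x p.1) (x q.1) p.2 q.2

/-- The vector `η = (0, η_1, 0, η_2, …, 0, η_k) ∈ ℝ^{2k}`. -/
def weylEta {k : ℕ} (η : Fin k → ℝ) : Fin k × Fin 2 → ℝ :=
  fun p => if p.2 = 1 then η p.1 else 0

/-- The `k`-point correlation function of the real zeros of the Weyl series, given by the
Kac–Rice formula `ρ_k(x) = (2π)^{-k} |det Γ|^{-1/2} ∫_{ℝ^k} |η_1⋯η_k| exp(-½⟨Γ⁻¹η, η⟩) dη`. -/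
def weylRho (k : ℕ) (x : Fin k → ℝ) : ℝ :=
  ((2 * Real.pi) ^ k)⁻¹ * (Real.sqrt |(weylGamma x).det|)⁻¹ *
    ∫ η : Fin k → ℝ,
      (∏ i, |η i|) *
        Real.exp (-(1 / 2) *
          ∑ p, (weylGamma x)⁻¹.mulVec (weylEta η) p * weylEta η p)

/-- The constant `K = 1/π + ∫_ℝ (ρ₂(0,t) − 1/π²) dt`. -/
def weylK : ℝ :=
  1 / Real.pi + ∫ t : ℝ, (weylRho 2 ![0, t] - 1 / Real.pi ^ 2)

/-- The interval `I_n = [−√n + n^{1/6} log n, √n − n^{1/6} log n]`. -/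
def weylIntvl (n : ℕ) : Set ℝ :=
  Set.Icc (-Real.sqrt n + (n : ℝ) ^ ((1 : ℝ) / 6) * Real.log n)
    (Real.sqrt n - (n : ℝ) ^ ((1 : ℝ) / 6) * Real.log n)

/-!
Off the event `∑ ξ_k² ≥ 9 n² N²`, whose probability is at most `e^{-N²/4}` by a Chernoff bound
for the chi-square variable, the function `y ↦ e^{-y²/2} P_n^{(m)}(y)` is Lipschitz on
`[-√n, √n]` with constant `6 n N √((m+2) n^{m+1})`: by Cauchy–Schwarz,
`e^{-y²/2} |P_n^{(j)}(y)| ≤ ‖ξ‖ √((j+1) n^j)`, because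
`∑_{k ≤ n} (k!/(k-j)!)² y^{2(k-j)} / k! ≤ (j+1) n^j e^{y²}`. Hence if the weighted derivative
exceeds `N n^{m/2}` somewhere on `I_n ⊆ [-√n, √n]`, it exceeds half of that at one of `O(n²)`
grid points. There it is a centred Gaussian of variance at most `(m+1) n^m`, so a union bound
gives `e^{-N²/4} + O(n²) e^{-N²/(8(m+1))}`, which is at most `C₀ n e^{-c N²}` as soon as
`C₀ n e^{-c N²} < 1`; otherwise the bound is trivial.
-/

open scoped NNReal

namespace ProbabilityTheory

variable {Ω : Type*} [MeasurableSpace Ω] {μ : Measure Ω}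

lemma HasSubgaussianMGF.mono {X : Ω → ℝ} {c c' : ℝ≥0} (h : HasSubgaussianMGF X c μ)
    (hc : c ≤ c') : HasSubgaussianMGF X c' μ where
  integrable_exp_mul := h.integrable_exp_mul
  mgf_le t := (h.mgf_le t).trans (by gcongr)

lemma HasSubgaussianMGF.measureReal_abs_ge_le [IsFiniteMeasure μ] {X : Ω → ℝ} {c : ℝ≥0}
    (h : HasSubgaussianMGF X c μ) {ε : ℝ} (hε : 0 ≤ ε) :
    μ.real {ω | ε ≤ |X ω|} ≤ 2 * exp (-ε ^ 2 / (2 * c)) := by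
  have hsub : {ω | ε ≤ |X ω|} ⊆ {ω | ε ≤ X ω} ∪ {ω | ε ≤ (-X) ω} := fun _ hω ↦
    (le_abs'.1 (Set.mem_ofPred.1 hω)).elim (fun h ↦ Or.inr (le_neg.2 h)) Or.inl
  calc μ.real {ω | ε ≤ |X ω|}
      ≤ μ.real {ω | ε ≤ X ω} + μ.real {ω | ε ≤ (-X) ω} :=
        (measureReal_mono hsub).trans (measureReal_union_le _ _)
    _ ≤ exp (-ε ^ 2 / (2 * c)) + exp (-ε ^ 2 / (2 * c)) :=
        add_le_add (h.measure_ge_le hε) (h.neg.measure_ge_le hε)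
    _ = 2 * exp (-ε ^ 2 / (2 * c)) := (two_mul _).symm

lemma hasSubgaussianMGF_of_map_eq_gaussianReal {X : Ω → ℝ} {v : ℝ≥0}
    (hX : μ.map X = gaussianReal 0 v) : HasSubgaussianMGF X v μ := by
  refine (HasSubgaussianMGF.id_map_iff
    (aemeasurable_of_map_neZero (by rw [hX]; infer_instance))).1 ?_
  rw [hX]
  exact ⟨integrable_exp_mul_gaussianReal, fun t ↦ by simp [mgf_id_gaussianReal]⟩

lemma measureReal_abs_sum_mul_ge_le {ι : Type*} {ξ : ι → Ω → ℝ} (hindep : iIndepFun ξ μ)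
    (hξ : ∀ k, μ.map (ξ k) = gaussianReal 0 1) (s : Finset ι) (a : ι → ℝ) {v ε : ℝ}
    (hv : ∑ k ∈ s, a k ^ 2 ≤ v) (hε : 0 ≤ ε) :
    μ.real {ω | ε ≤ |∑ k ∈ s, a k * ξ k ω|} ≤ 2 * exp (-ε ^ 2 / (2 * v)) := by
  have := hindep.isProbabilityMeasure
  have hv0 : 0 ≤ v := (Finset.sum_nonneg fun k _ ↦ sq_nonneg (a k)).trans hv
  have hterm k : HasSubgaussianMGF (fun ω ↦ a k * ξ k ω) (a k ^ 2).toNNReal μ := by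
    convert (hasSubgaussianMGF_of_map_eq_gaussianReal (hξ k)).const_mul (a k) using 1
    ext
    rw [Real.coe_toNNReal _ (sq_nonneg _)]
    exact (mul_one _).symm
  have hsum := HasSubgaussianMGF.sum_of_iIndepFun
    (hindep.comp (fun k x ↦ a k * x) fun k ↦ measurable_const_mul (a k)) (s := s) fun k _ ↦ hterm k
  have hsum_v := hsum.mono (c' := v.toNNReal) <| by
    rw [Real.le_toNNReal_iff_coe_le hv0, NNReal.coe_sum]
    simpa [sq_nonneg] using hv
  simpa [Real.coe_toNNReal v hv0] using hsum_v.measureReal_abs_ge_le hε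

/-- For `1 / 2 ≤ t` both sides are junk zeros. -/
lemma integral_exp_mul_sq_gaussianReal (t : ℝ) :
    ∫ x, exp (t * x ^ 2) ∂gaussianReal 0 1 = (√(1 - 2 * t))⁻¹ := by
  have hpdf (x : ℝ) : gaussianPDFReal 0 1 x • exp (t * x ^ 2)
      = (√(2 * π))⁻¹ * exp (-(1 / 2 - t) * x ^ 2) := by
    rw [gaussianPDFReal, smul_eq_mul, mul_assoc, ← exp_add]
    congr 2
    · simp
    · simp; ring
  rw [integral_gaussianReal_eq_integral_smul one_ne_zero]
  simp_rw [hpdf]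
  rw [integral_const_mul, integral_gaussian, ← sqrt_inv, ← sqrt_inv, ← sqrt_mul (by positivity)]
  congr 1
  field_simp

lemma measureReal_sum_sq_ge_le {ι : Type*} {ξ : ι → Ω → ℝ} (hindep : iIndepFun ξ μ)
    (hξ : ∀ k, μ.map (ξ k) = gaussianReal 0 1) (s : Finset ι) {t : ℝ} (ht0 : 0 ≤ t)
    (ht : t < 1 / 2) (R : ℝ) :
    μ.real {ω | R ≤ ∑ k ∈ s, ξ k ω ^ 2} ≤ exp (-t * R) * (√(1 - 2 * t))⁻¹ ^ s.card := by
  have := hindep.isProbabilityMeasure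
  have hmeas k : AEMeasurable (ξ k) μ := aemeasurable_of_map_neZero (by rw [hξ k]; infer_instance)
  have hmgf_sq k : mgf (fun ω ↦ ξ k ω ^ 2) μ t = (√(1 - 2 * t))⁻¹ := by
    change mgf ((fun x ↦ x ^ 2) ∘ ξ k) μ t = _
    rw [← mgf_map (hmeas k) (by fun_prop), hξ k]
    exact integral_exp_mul_sq_gaussianReal t
  have hindep_sq : iIndepFun (fun k ω ↦ ξ k ω ^ 2) μ :=
    hindep.comp (fun _ x ↦ x ^ 2) fun _ ↦ by fun_prop
  have hmgf : mgf (∑ k ∈ s, fun ω ↦ ξ k ω ^ 2) μ t = (√(1 - 2 * t))⁻¹ ^ s.card := by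
    rw [hindep_sq.mgf_sum₀ (fun k ↦ (hmeas k).pow_const 2) s,
      Finset.prod_congr rfl fun k _ ↦ hmgf_sq k, Finset.prod_const]
  have hint : Integrable (fun ω ↦ exp (t * (∑ k ∈ s, fun ω ↦ ξ k ω ^ 2) ω)) μ :=
    mgf_pos_iff.1 (hmgf ▸ by have := sqrt_pos.2 (by linarith : 0 < 1 - 2 * t); positivity)
  simpa [hmgf, Finset.sum_apply] using measure_ge_le_exp_mul_mgf R ht0 hint

end ProbabilityTheory

open Polynomial
open scoped Nat

lemma abs_sum_mul_le_sqrt_mul_sqrt {ι : Type*} (s : Finset ι) (f g : ι → ℝ) :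
    |∑ i ∈ s, f i * g i| ≤ √(∑ i ∈ s, f i ^ 2) * √(∑ i ∈ s, g i ^ 2) := by
  refine abs_le.2 ⟨?_, Real.sum_mul_le_sqrt_mul_sqrt s f g⟩
  have := Real.sum_mul_le_sqrt_mul_sqrt s (fun i ↦ -f i) g
  simp only [neg_mul, Finset.sum_neg_distrib, neg_sq] at this
  linarith

lemma sum_range_pow_sub_div_factorial_le {x : ℝ} (hx : 0 ≤ x) (m n : ℕ) :
    ∑ k ∈ Finset.range n, x ^ (k - m) / (k - m)! ≤ (m + 1) * exp x := by
  have hnonneg : ∀ k, 0 ≤ x ^ (k - m) / (k - m)! := fun k ↦ by positivity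
  calc ∑ k ∈ Finset.range n, x ^ (k - m) / (k - m)!
      ≤ ∑ k ∈ Finset.range (m + n), x ^ (k - m) / (k - m)! :=
        Finset.sum_le_sum_of_subset_of_nonneg (Finset.range_subset_range.2 (by omega))
          fun k _ _ ↦ hnonneg k
    _ = m + ∑ j ∈ Finset.range n, x ^ j / j ! := by
        have hlow : ∀ k ∈ Finset.range m, x ^ (k - m) / (k - m)! = 1 := fun k hk ↦ by
          simp [Nat.sub_eq_zero_of_le (Finset.mem_range.1 hk).le]
        rw [Finset.sum_range_add, Finset.sum_congr rfl hlow]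
        simp
    _ ≤ m + exp x := by gcongr; exact Real.sum_le_exp_of_nonneg hx n
    _ ≤ (m + 1) * exp x := by nlinarith [one_le_exp hx]

lemma descFactorial_sq_div_factorial_le {k n : ℕ} (hk : k ≤ n) (m : ℕ) :
    (k.descFactorial m : ℝ) ^ 2 / k ! ≤ n ^ m / (k - m)! := by
  rcases lt_or_ge k m with hkm | hmk
  · rw [Nat.descFactorial_eq_zero_iff_lt.2 hkm, Nat.cast_zero, zero_pow two_ne_zero, zero_div]
    positivity
  have hd : (0 : ℝ) < k.descFactorial m := by exact_mod_cast Nat.descFactorial_pos.2 hmk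
  calc (k.descFactorial m : ℝ) ^ 2 / k ! = k.descFactorial m / (k - m)! := by
        rw [← Nat.factorial_mul_descFactorial hmk, Nat.cast_mul]
        field_simp
    _ ≤ n ^ m / (k - m)! := by
        gcongr
        exact_mod_cast (Nat.descFactorial_le_pow k m).trans (Nat.pow_le_pow_left hk m)

def weylDerivCoeff (m k : ℕ) (y : ℝ) : ℝ :=
  exp (-(y ^ 2) / 2) * k.descFactorial m * y ^ (k - m) / √(k !)

lemma exp_mul_eval_iterate_derivative_weylPoly {Ω : Type*} (ξ : ℕ → Ω → ℝ) (n : ℕ) (ω : Ω)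
    (m : ℕ) (y : ℝ) :
    exp (-(y ^ 2) / 2) * (derivative^[m] (weylPoly ξ n ω)).eval y
      = ∑ k ∈ Finset.range (n + 1), weylDerivCoeff m k y * ξ k ω := by
  rw [weylPoly, iterate_derivative_sum, eval_finsetSum, Finset.mul_sum]
  refine Finset.sum_congr rfl fun k _ ↦ ?_
  rw [iterate_derivative_C_mul, iterate_derivative_X_pow_eq_C_mul]
  simp only [eval_mul, eval_C, eval_pow, eval_X, weylDerivCoeff]
  ring

lemma sum_weylDerivCoeff_sq_le (m n : ℕ) (y : ℝ) :
    ∑ k ∈ Finset.range (n + 1), weylDerivCoeff m k y ^ 2 ≤ (m + 1) * n ^ m := by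
  have hterm : ∀ k ∈ Finset.range (n + 1), weylDerivCoeff m k y ^ 2
      ≤ exp (-(y ^ 2)) * n ^ m * ((y ^ 2) ^ (k - m) / (k - m)!) := fun k hk ↦ by
    have hk : k ≤ n := Nat.lt_succ_iff.1 (Finset.mem_range.1 hk)
    calc weylDerivCoeff m k y ^ 2
        = exp (-(y ^ 2)) * ((k.descFactorial m : ℝ) ^ 2 / k !) * (y ^ 2) ^ (k - m) := by
          have hexp : exp (-(y ^ 2) / 2) ^ 2 = exp (-(y ^ 2)) := by
            rw [← exp_nat_mul]; ring_nf
          rw [weylDerivCoeff, div_pow, mul_pow, mul_pow, hexp, ← pow_mul, ← pow_mul,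
            mul_comm (k - m) 2, sq_sqrt (by positivity)]
          ring
      _ ≤ exp (-(y ^ 2)) * (n ^ m / (k - m)!) * (y ^ 2) ^ (k - m) := by
          gcongr exp (-(y ^ 2)) * ?_ * _
          exact descFactorial_sq_div_factorial_le hk m
      _ = exp (-(y ^ 2)) * n ^ m * ((y ^ 2) ^ (k - m) / (k - m)!) := by ring
  calc ∑ k ∈ Finset.range (n + 1), weylDerivCoeff m k y ^ 2
      ≤ exp (-(y ^ 2)) * n ^ m * ∑ k ∈ Finset.range (n + 1), (y ^ 2) ^ (k - m) / (k - m)! := by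
        rw [Finset.mul_sum]
        exact Finset.sum_le_sum hterm
    _ ≤ exp (-(y ^ 2)) * n ^ m * ((m + 1) * exp (y ^ 2)) := by
        gcongr
        exact sum_range_pow_sub_div_factorial_le (sq_nonneg y) m (n + 1)
    _ = (m + 1) * n ^ m := by
        rw [show exp (-(y ^ 2)) * n ^ m * ((m + 1) * exp (y ^ 2))
          = (m + 1) * n ^ m * (exp (-(y ^ 2)) * exp (y ^ 2)) by ring, ← exp_add]
        simp

lemma exp_mul_abs_eval_iterate_derivative_weylPoly_le {Ω : Type*} (ξ : ℕ → Ω → ℝ) (n : ℕ)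
    (ω : Ω) (m : ℕ) (y : ℝ) :
    exp (-(y ^ 2) / 2) * |(derivative^[m] (weylPoly ξ n ω)).eval y|
      ≤ √(∑ k ∈ Finset.range (n + 1), ξ k ω ^ 2) * √((m + 1) * n ^ m) := by
  rw [← abs_of_pos (exp_pos (-(y ^ 2) / 2)), ← abs_mul,
    exp_mul_eval_iterate_derivative_weylPoly]
  refine (abs_sum_mul_le_sqrt_mul_sqrt _ _ _).trans ?_
  rw [mul_comm (√(∑ k ∈ Finset.range (n + 1), ξ k ω ^ 2))]
  gcongr
  exact sum_weylDerivCoeff_sq_le m n y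

lemma hasDerivAt_exp_mul_eval (p : ℝ[X]) (z : ℝ) :
    HasDerivAt (fun y ↦ exp (-(y ^ 2) / 2) * p.eval y)
      (exp (-(z ^ 2) / 2) * p.derivative.eval z - z * (exp (-(z ^ 2) / 2) * p.eval z)) z := by
  have hexp : HasDerivAt (fun y ↦ exp (-(y ^ 2) / 2)) (exp (-(z ^ 2) / 2) * -z) z := by
    refine (((hasDerivAt_pow 2 z).fun_neg.div_const 2).exp).congr_deriv ?_
    simp only [Nat.cast_ofNat]
    ring
  exact (hexp.mul (p.hasDerivAt z)).congr_deriv (by ring)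

lemma abs_sub_exp_mul_eval_iterate_derivative_weylPoly_le {Ω : Type*} (ξ : ℕ → Ω → ℝ)
    (n : ℕ) (ω : Ω) (m : ℕ) {x y : ℝ} (hx : x ∈ Set.Icc (-√n) √n) (hy : y ∈ Set.Icc (-√n) √n) :
    |exp (-(y ^ 2) / 2) * (derivative^[m] (weylPoly ξ n ω)).eval y
        - exp (-(x ^ 2) / 2) * (derivative^[m] (weylPoly ξ n ω)).eval x|
      ≤ 2 * √(∑ k ∈ Finset.range (n + 1), ξ k ω ^ 2) * √((m + 2) * n ^ (m + 1)) * |y - x| := by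
  set p := derivative^[m] (weylPoly ξ n ω)
  set S := √(∑ k ∈ Finset.range (n + 1), ξ k ω ^ 2)
  have hp' : p.derivative = derivative^[m + 1] (weylPoly ξ n ω) :=
    (Function.iterate_succ_apply' _ _ _).symm
  have hbound : ∀ z ∈ Set.Icc (-√n) √n,
      ‖exp (-(z ^ 2) / 2) * p.derivative.eval z - z * (exp (-(z ^ 2) / 2) * p.eval z)‖
        ≤ 2 * S * √((m + 2) * n ^ (m + 1)) := fun z hz ↦ by
    have hz : |z| ≤ √n := abs_le.2 hz
    have h1 := exp_mul_abs_eval_iterate_derivative_weylPoly_le ξ n ω (m + 1) z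
    have h0 := exp_mul_abs_eval_iterate_derivative_weylPoly_le ξ n ω m z
    rw [← hp'] at h1
    have hcoef : √n * √((m + 1) * n ^ m) ≤ √((m + 2) * n ^ (m + 1)) := by
      rw [← sqrt_mul (Nat.cast_nonneg n)]
      apply Real.sqrt_le_sqrt
      rw [pow_succ]
      nlinarith [pow_nonneg (Nat.cast_nonneg (α := ℝ) n) m, Nat.cast_nonneg (α := ℝ) n]
    push_cast at h1
    rw [Real.norm_eq_abs]
    calc |exp (-(z ^ 2) / 2) * p.derivative.eval z - z * (exp (-(z ^ 2) / 2) * p.eval z)|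
        ≤ exp (-(z ^ 2) / 2) * |p.derivative.eval z|
          + |z| * (exp (-(z ^ 2) / 2) * |p.eval z|) := by
          refine (abs_sub _ _).trans_eq ?_
          rw [abs_mul, abs_mul, abs_mul, abs_of_pos (exp_pos _)]
      _ ≤ S * √((m + 1 + 1) * n ^ (m + 1)) + √n * (S * √((m + 1) * n ^ m)) := by
          gcongr
      _ ≤ 2 * S * √((m + 2) * n ^ (m + 1)) := by
          have hS : 0 ≤ S := sqrt_nonneg _
          rw [show (m : ℝ) + 1 + 1 = m + 2 by ring]
          nlinarith [mul_le_mul_of_nonneg_left hcoef hS]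
  simpa only [Real.norm_eq_abs] using
    (convex_Icc (-√n) √n).norm_image_sub_le_of_norm_hasDerivWithin_le
      (fun z _ ↦ (hasDerivAt_exp_mul_eval p z).hasDerivWithinAt) hbound hx hy

lemma exists_le_abs_apply_grid {f : ℝ → ℝ} {a b L δ y : ℝ}
    (hf : ∀ x ∈ Set.Icc a b, ∀ z ∈ Set.Icc a b, |f z - f x| ≤ L * |z - x|) (hL : 0 ≤ L)
    (hδ : 0 < δ) (hy : y ∈ Set.Icc a b) :
    ∃ i < ⌊(b - a) / δ⌋₊ + 1, |f y| - L * δ ≤ |f (a + i * δ)| := by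
  set i := ⌊(y - a) / δ⌋₊
  have hya : 0 ≤ (y - a) / δ := div_nonneg (by linarith [hy.1]) hδ.le
  have hlow : i * δ ≤ y - a := (le_div_iff₀ hδ).1 (Nat.floor_le hya)
  have hup : y - a < (i + 1) * δ := (div_lt_iff₀ hδ).1 (Nat.lt_floor_add_one _)
  have hgrid : a + i * δ ∈ Set.Icc a b :=
    ⟨by nlinarith [Nat.cast_nonneg (α := ℝ) i], by linarith [hy.2]⟩
  refine ⟨i, Nat.lt_succ_of_le (Nat.floor_le_floor (by gcongr; exact hy.2)), ?_⟩
  have hdist : |y - (a + i * δ)| ≤ δ := abs_le.2 ⟨by linarith, by linarith⟩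
  have := hf _ hgrid y hy
  have := abs_sub_abs_le_abs_sub (f y) (f (a + i * δ))
  nlinarith [mul_le_mul_of_nonneg_left hdist hL]

lemma exists_le_abs_sum_weylDerivCoeff_mul {Ω : Type*} (ξ : ℕ → Ω → ℝ) (n : ℕ) (ω : Ω) (m : ℕ)
    {R δ y : ℝ} (hR : √(∑ k ∈ Finset.range (n + 1), ξ k ω ^ 2) ≤ R) (hδ : 0 < δ)
    (hy : y ∈ Set.Icc (-√n) √n) :
    ∃ i < ⌊(√n - -√n) / δ⌋₊ + 1,
      exp (-(y ^ 2) / 2) * |(derivative^[m] (weylPoly ξ n ω)).eval y|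
          - 2 * R * √((m + 2) * n ^ (m + 1)) * δ
        ≤ |∑ k ∈ Finset.range (n + 1), weylDerivCoeff m k (-√n + i * δ) * ξ k ω| := by
  obtain ⟨i, hi, hgrid⟩ := exists_le_abs_apply_grid
    (f := fun z ↦ exp (-(z ^ 2) / 2) * (derivative^[m] (weylPoly ξ n ω)).eval z)
    (L := 2 * R * √((m + 2) * n ^ (m + 1)))
    (fun x hx z hz ↦ (abs_sub_exp_mul_eval_iterate_derivative_weylPoly_le ξ n ω m hx hz).trans
      (by gcongr)) (by have := (sqrt_nonneg _).trans hR; positivity) hδ hy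
  refine ⟨i, hi, ?_⟩
  rwa [← exp_mul_eval_iterate_derivative_weylPoly, ← abs_of_pos (exp_pos (-(y ^ 2) / 2)),
    ← abs_mul]

def weylGridStep (m n : ℕ) : ℝ := (12 * n * √((m + 2) * n))⁻¹

lemma weylGridStep_pos (m : ℕ) {n : ℕ} (hn : 1 ≤ n) : 0 < weylGridStep m n := by
  have : (0 : ℝ) < n := by exact_mod_cast hn
  unfold weylGridStep
  positivity

lemma mul_weylGridStep (m : ℕ) {n : ℕ} (hn : 1 ≤ n) (N : ℝ) :
    2 * (3 * n * N) * √((m + 2) * n ^ (m + 1)) * weylGridStep m n = N * √n ^ m / 2 := by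
  have : (0 : ℝ) < n := by exact_mod_cast hn
  have hsq : (n : ℝ) ^ (m + 1) = n * (√n ^ m) ^ 2 := by
    rw [← pow_mul, mul_comm m 2, pow_mul, sq_sqrt this.le, pow_succ, mul_comm]
  rw [hsq, ← mul_assoc ((m : ℝ) + 2), sqrt_mul' _ (sq_nonneg _), sqrt_sq (by positivity),
    weylGridStep]
  have : 0 < √((m + 2) * n) := by positivity
  field_simp
  ring

lemma natFloor_div_weylGridStep_add_one_le (m : ℕ) {n : ℕ} (hn : 1 ≤ n) :
    (⌊(√n - -√n) / weylGridStep m n⌋₊ + 1 : ℕ) ≤ (24 * √(m + 2) + 1) * (n : ℝ) ^ 2 := by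
  have hn' : (1 : ℝ) ≤ n := by exact_mod_cast hn
  have hdiv : (√n - -√n) / weylGridStep m n = 24 * √(m + 2) * n ^ 2 := by
    rw [weylGridStep, div_inv_eq_mul, sqrt_mul (by positivity), ← sq_sqrt (Nat.cast_nonneg n)]
    simp only [sqrt_sq (sqrt_nonneg (n : ℝ))]
    ring
  push_cast
  calc (⌊(√n - -√n) / weylGridStep m n⌋₊ : ℝ) + 1 ≤ (√n - -√n) / weylGridStep m n + 1 := by
        gcongr
        exact Nat.floor_le (div_nonneg (by linarith [sqrt_nonneg (n : ℝ)])
          (weylGridStep_pos m hn).le)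
    _ ≤ (24 * √(m + 2) + 1) * n ^ 2 := by
        rw [hdiv]
        nlinarith [one_le_pow₀ (n := 2) hn']

section Tail

variable {Ω : Type*} [MeasurableSpace Ω] {μ : Measure Ω} {ξ : ℕ → Ω → ℝ}

lemma measureReal_sum_range_sq_ge_le (hindep : iIndepFun ξ μ)
    (hξ : ∀ k, μ.map (ξ k) = gaussianReal 0 1) {n : ℕ} (hn : 1 ≤ n) {N : ℝ} (hN : 1 ≤ N) :
    μ.real {ω | (3 * n * N) ^ 2 ≤ ∑ k ∈ Finset.range (n + 1), ξ k ω ^ 2}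
      ≤ exp (-N ^ 2 / 4) := by
  refine (measureReal_sum_sq_ge_le hindep hξ _ (t := 1 / 4) (by norm_num) (by norm_num) _).trans ?_
  have hsqrt : (√(1 - 2 * (1 / 4) : ℝ))⁻¹ ≤ exp 1 := by
    rw [inv_le_comm₀ (by positivity) (exp_pos 1), ← exp_neg]
    calc exp (-1) ≤ 1 / 2 := by
          rw [exp_neg, inv_le_comm₀ (exp_pos 1) (by norm_num)]
          linarith [add_one_le_exp (1 : ℝ)]
      _ ≤ √(1 - 2 * (1 / 4)) := by
          rw [le_sqrt (by norm_num) (by norm_num)]; norm_num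
  have hn' : (1 : ℝ) ≤ n := by exact_mod_cast hn
  calc exp (-(1 / 4) * (3 * n * N) ^ 2) * (√(1 - 2 * (1 / 4) : ℝ))⁻¹ ^ (Finset.range (n + 1)).card
      ≤ exp (-(1 / 4) * (3 * n * N) ^ 2) * exp 1 ^ (n + 1) := by
        rw [Finset.card_range]; gcongr
    _ = exp (-(1 / 4) * (3 * n * N) ^ 2 + (n + 1)) := by
        rw [← exp_nat_mul, ← exp_add]; push_cast; ring_nf
    _ ≤ exp (-N ^ 2 / 4) := by
        gcongr
        nlinarith [mul_le_mul hn' (one_le_pow₀ (n := 2) hN) zero_le_one (by positivity),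
          sq_nonneg ((n : ℝ) * N)]

lemma measureReal_exists_exp_mul_abs_eval_gt_le (hindep : iIndepFun ξ μ)
    (hξ : ∀ k, μ.map (ξ k) = gaussianReal 0 1) (m : ℕ) {n : ℕ} (hn : 1 ≤ n) {N : ℝ}
    (hN : 1 ≤ N) :
    μ.real {ω | ∃ y ∈ Set.Icc (-√n) √n,
        exp (-(y ^ 2) / 2) * |(derivative^[m] (weylPoly ξ n ω)).eval y|
          > N * (n : ℝ) ^ ((m : ℝ) / 2)}
      ≤ exp (-N ^ 2 / 4) + (24 * √(m + 2) + 1) * n ^ 2 * (2 * exp (-N ^ 2 / (8 * (m + 1)))) := by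
  have := hindep.isProbabilityMeasure
  have hσ : (n : ℝ) ^ ((m : ℝ) / 2) = √n ^ m := by
    rw [rpow_div_two_eq_sqrt _ (Nat.cast_nonneg n), rpow_natCast]
  set σ := √n ^ m
  set M := ⌊(√n - -√n) / weylGridStep m n⌋₊ + 1
  set A : ℕ → Set Ω := fun i ↦ {ω | N * σ / 2 ≤
    |∑ k ∈ Finset.range (n + 1), weylDerivCoeff m k (-√n + i * weylGridStep m n) * ξ k ω|}
  have hsub : {ω | ∃ y ∈ Set.Icc (-√n) √n,
        exp (-(y ^ 2) / 2) * |(derivative^[m] (weylPoly ξ n ω)).eval y| > N * σ}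
      ⊆ {ω | (3 * n * N) ^ 2 ≤ ∑ k ∈ Finset.range (n + 1), ξ k ω ^ 2}
        ∪ ⋃ i ∈ Finset.range M, A i := by
    rintro ω ⟨y, hy, hgt⟩
    by_cases hB : (3 * n * N) ^ 2 ≤ ∑ k ∈ Finset.range (n + 1), ξ k ω ^ 2
    · exact Or.inl hB
    obtain ⟨i, hi, hgrid⟩ := exists_le_abs_sum_weylDerivCoeff_mul ξ n ω m
      (sqrt_le_iff.2 ⟨by positivity, (not_le.1 hB).le⟩) (weylGridStep_pos m hn) hy
    rw [mul_weylGridStep m hn] at hgrid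
    exact Or.inr (Set.mem_biUnion (Finset.mem_range.2 hi) (by change N * σ / 2 ≤ _; linarith))
  have hA i : μ.real (A i) ≤ 2 * exp (-N ^ 2 / (8 * (m + 1))) := by
    refine (measureReal_abs_sum_mul_ge_le hindep hξ _ _ (sum_weylDerivCoeff_sq_le m n _)
      (by positivity)).trans_eq ?_
    have : (0 : ℝ) < n := by exact_mod_cast hn
    have : 0 < σ := by positivity
    rw [← sq_sqrt (Nat.cast_nonneg (α := ℝ) n), ← pow_mul, mul_comm 2 m, pow_mul]
    congr 2
    field_simp
    ring
  rw [hσ]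
  calc μ.real _
      ≤ μ.real {ω | (3 * n * N) ^ 2 ≤ ∑ k ∈ Finset.range (n + 1), ξ k ω ^ 2}
        + ∑ i ∈ Finset.range M, μ.real (A i) :=
        (measureReal_mono hsub).trans ((measureReal_union_le _ _).trans
          (add_le_add_right (measureReal_biUnion_finset_le _ _) _))
    _ ≤ exp (-N ^ 2 / 4) + M * (2 * exp (-N ^ 2 / (8 * (m + 1)))) := by
        gcongr
        · exact measureReal_sum_range_sq_ge_le hindep hξ hn hN
        · simpa using Finset.sum_le_card_nsmul (Finset.range M) _ _ fun i _ ↦ hA i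
    _ ≤ _ := by gcongr; exact natFloor_div_weylGridStep_add_one_le m hn

end Tail

lemma weylIntvl_subset_Icc (n : ℕ) : weylIntvl n ⊆ Set.Icc (-√n) √n := by
  have h : 0 ≤ (n : ℝ) ^ ((1 : ℝ) / 6) * Real.log n :=
    mul_nonneg (rpow_nonneg (Nat.cast_nonneg n) _) (log_natCast_nonneg n)
  exact Set.Icc_subset_Icc (by linarith) (by linarith)

lemma exp_neg_sq_div_four_add_le {m : ℕ} {n N K : ℝ} (hn : 1 ≤ n) (hK : 0 ≤ K)
    (hnu : n * exp (-N ^ 2 / (32 * (m + 1))) ≤ 1) :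
    exp (-N ^ 2 / 4) + K * n ^ 2 * (2 * exp (-N ^ 2 / (8 * (m + 1))))
      ≤ (2 * K + 1) * n * exp (-N ^ 2 / (32 * (m + 1))) := by
  set u := exp (-N ^ 2 / (32 * (m + 1)))
  have hu : 0 < u := exp_pos _
  have hu1 : u ≤ 1 :=
    exp_le_one_iff.2 (div_nonpos_of_nonpos_of_nonneg (by nlinarith) (by positivity))
  have hquarter : exp (-N ^ 2 / 4) ≤ u := by
    refine exp_le_exp.2 ?_
    rw [neg_div, neg_div, neg_le_neg_iff]
    gcongr
    linarith [(Nat.cast_nonneg m : (0 : ℝ) ≤ m)]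
  have hpow : exp (-N ^ 2 / (8 * (m + 1))) = u ^ 4 := by
    rw [← exp_nat_mul]; congr 1; push_cast; field_simp; ring
  rw [hpow]
  nlinarith [mul_le_mul hnu hu1 (by positivity) zero_le_one, mul_nonneg hK hu.le,
    mul_nonneg (mul_nonneg hK hu.le) (mul_nonneg (sub_nonneg.2 hnu) (by positivity : 0 ≤ n * u))]

lemma one_le_of_three_mul_exp_lt_one {m : ℕ} {N : ℝ} (hN : 0 < N)
    (h : 3 * exp (-N ^ 2 / (32 * (m + 1))) < 1) : 1 ≤ N := by
  by_contra! hN1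
  have hexp : exp (-1) ≤ exp (-N ^ 2 / (32 * (m + 1))) := by
    refine exp_le_exp.2 ?_
    rw [neg_div, neg_le_neg_iff, div_le_one (by positivity)]
    nlinarith [(Nat.cast_nonneg m : (0 : ℝ) ≤ m)]
  have h3 : 1 ≤ 3 * exp (-1) := by
    rw [exp_neg, ← div_eq_mul_inv, le_div_iff₀ (exp_pos 1)]
    linarith [exp_one_lt_d9]
  linarith

theorem weyl_poly_derivative_sup_bound_general
    {Ω : Type*} [MeasureSpace Ω]
    (ξ : ℕ → Ω → ℝ)
    (hdist : ∀ k, Measure.map (ξ k) ℙ = gaussianReal 0 1)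
    (hindep : iIndepFun ξ ℙ)
    (m : ℕ) :
    ∃ c C₀ : ℝ, 0 < c ∧ 0 < C₀ ∧ ∀ n : ℕ, 1 ≤ n → ∀ N : ℝ, 0 < N →
      ℙ {ω : Ω | ∃ y ∈ weylIntvl n,
            Real.exp (-(y ^ 2) / 2) * |(Polynomial.derivative^[m] (weylPoly ξ n ω)).eval y|
              > N * (n : ℝ) ^ ((m : ℝ) / 2)}
        ≤ ENNReal.ofReal (C₀ * n * Real.exp (-c * N ^ 2)) := by
  have := hindep.isProbabilityMeasure
  set K := 24 * √(m + 2) + 1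
  refine ⟨1 / (32 * (m + 1)), 2 * K + 1, by positivity, by positivity, fun n hn N hN ↦ ?_⟩
  rw [show -(1 / (32 * (m + 1))) * N ^ 2 = -N ^ 2 / (32 * (m + 1)) by ring]
  set u := exp (-N ^ 2 / (32 * (m + 1)))
  by_cases htriv : 1 ≤ (2 * K + 1) * n * u
  · exact prob_le_one.trans (ENNReal.one_le_ofReal.2 htriv)
  have hn' : (1 : ℝ) ≤ n := by exact_mod_cast hn
  have hK : 1 ≤ K := by simp only [K]; linarith [sqrt_nonneg ((m : ℝ) + 2)]
  have hN1 : 1 ≤ N := by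
    refine one_le_of_three_mul_exp_lt_one (m := m) hN (lt_of_le_of_lt ?_ (not_le.1 htriv))
    gcongr ?_ * u
    nlinarith
  rw [← ofReal_measureReal]
  refine ENNReal.ofReal_le_ofReal ?_
  calc (ℙ : Measure Ω).real _
      ≤ (ℙ : Measure Ω).real {ω | ∃ y ∈ Set.Icc (-√n) √n,
          exp (-(y ^ 2) / 2) * |(derivative^[m] (weylPoly ξ n ω)).eval y|
            > N * (n : ℝ) ^ ((m : ℝ) / 2)} :=
        measureReal_mono <| by
          rintro ω ⟨y, hy, hgt⟩
          exact ⟨y, weylIntvl_subset_Icc n hy, hgt⟩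
    _ ≤ _ := measureReal_exists_exp_mul_abs_eval_gt_le hindep hdist m hn hN1
    _ ≤ _ := exp_neg_sq_div_four_add_le hn' (by positivity) (by nlinarith)

/-- **Uniform derivative bound for the Weyl polynomial on `I_n`.**
For every `m ≥ 0` there are constants `c, C₀ > 0` (depending only on `m`) such that for all
`n ≥ 1` and `N > 0`,
`P(sup_{y ∈ I_n} e^{−y²/2}|P_n^{(m)}(y)| > N n^{m/2}) ≤ C₀ n e^{−c N²}`. -/
theorem weyl_poly_derivative_sup_bound
    {Ω : Type*} [MeasureSpace Ω] [IsProbabilityMeasure (ℙ : Measure Ω)]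
    (ξ : ℕ → Ω → ℝ)
    (hmeas : ∀ k, Measurable (ξ k))
    (hdist : ∀ k, Measure.map (ξ k) ℙ = gaussianReal 0 1)
    (hindep : iIndepFun ξ ℙ)
    (m : ℕ) :
    ∃ c C₀ : ℝ, 0 < c ∧ 0 < C₀ ∧ ∀ n : ℕ, 1 ≤ n → ∀ N : ℝ, 0 < N →
      ℙ {ω : Ω | ∃ y ∈ weylIntvl n,
            Real.exp (-(y ^ 2) / 2) * |(Polynomial.derivative^[m] (weylPoly ξ n ω)).eval y|
              > N * (n : ℝ) ^ ((m : ℝ) / 2)}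
        ≤ ENNReal.ofReal (C₀ * n * Real.exp (-c * N ^ 2)) :=
  weyl_poly_derivative_sup_bound_general ξ hdist hindep m
end
end

section
/- Let F: ℝ → ℝ be twice continuously differentiable and G: ℝ → ℝ be continuous. Let ε₁, M, M' > 0, let x₀ ∈ ℝ, and set I = [x₀ − ε₁/M, x₀ + ε₁/M]. Assume that F(x₀) = 0, |F'(x₀)| ≥ ε₁, |F''(x)| ≤ M for all x ∈ I, and sup_{x ∈ I} |F(x) − G(x)| ≤ M'. If M' ≤ ε₁²/(4M), then G has a root in I, i.e., there exists y ∈ I with G(y) = 0. -/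
/-!
By Taylor's theorem, at the two endpoints `x₀ ± h`, `h = ε₁ / M`, the function `F` differs from
its tangent line by at most `M h² / 2 = ε₁ h / 2`, and `G` differs from `F` by at most
`M' ≤ ε₁ h / 4`. The tangent line has absolute value at least `ε₁ h` there, so `G` has the sign of
`F'(x₀) · (± h)` at `x₀ ± h`: opposite signs at the two endpoints, and the intermediate value
theorem gives a root.
-/

open Set

lemma abs_sub_taylor_one_le {f : ℝ → ℝ} (hf : ContDiff ℝ 2 f) {x₀ x C : ℝ}
    (hC : ∀ y ∈ uIcc x₀ x, |deriv (deriv f) y| ≤ C) :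
    |f x - f x₀ - deriv f x₀ * (x - x₀)| ≤ C * (x - x₀) ^ 2 / 2 := by
  rcases eq_or_ne x₀ x with rfl | hx
  · simp
  obtain ⟨y, hy, hrem⟩ := taylor_mean_remainder_lagrange_iteratedDeriv (n := 1) hx hf.contDiffOn
  have hpoly : taylorWithinEval f 1 (uIcc x₀ x) x₀ x = f x₀ + deriv f x₀ * (x - x₀) := by
    have hderiv : derivWithin f (uIcc x₀ x) x₀ = deriv f x₀ :=
      (hf.differentiable two_ne_zero x₀).derivWithin (uniqueDiffOn_uIcc hx x₀ left_mem_uIcc)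
    simp [taylorWithinEval_succ, hderiv, mul_comm]
  have hsecond : iteratedDeriv 2 f y = deriv (deriv f) y := by
    rw [iteratedDeriv_succ, iteratedDeriv_one]
  rw [sub_sub, ← hpoly, hrem, hsecond, abs_div, abs_mul, abs_pow, sq_abs]
  norm_num
  gcongr
  exact hC y (uIoo_subset_uIcc_self hy)

lemma mul_pos_of_abs_sub_lt_abs {α : Type*} [CommRing α] [LinearOrder α] [IsStrictOrderedRing α]
    {u v : α} (h : |u - v| < |v|) : 0 < u * v := by
  obtain ⟨h₁, h₂⟩ := abs_lt.mp h
  rcases le_or_gt 0 v with hv | hv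
  · rw [abs_of_nonneg hv] at h₁ h₂
    exact mul_pos (by linarith) (by linarith)
  · rw [abs_of_neg hv] at h₁ h₂
    exact mul_pos_of_neg_of_neg (by linarith) hv

lemma exists_mem_uIcc_eq_zero_of_mul_nonpos {α : Type*} [ConditionallyCompleteLinearOrder α]
    [TopologicalSpace α] [OrderTopology α] [DenselyOrdered α] {f : α → ℝ} {a b : α}
    (hf : ContinuousOn f (uIcc a b)) (hab : f a * f b ≤ 0) : ∃ c ∈ uIcc a b, f c = 0 := by
  refine intermediate_value_uIcc hf (mem_uIcc.2 ?_)
  rcases mul_nonpos_iff.1 hab with h | h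
  · exact Or.inr ⟨h.2, h.1⟩
  · exact Or.inl h

lemma mul_tangent_pos_of_abs_sub_le {F G : ℝ → ℝ} (hF : ContDiff ℝ 2 F) {ε M M' x₀ δ : ℝ}
    (hε : 0 < ε) (hM : 0 < M) (hδ : |δ| = ε / M) (hFx₀ : F x₀ = 0) (hF' : ε ≤ |deriv F x₀|)
    (hF'' : ∀ x ∈ uIcc x₀ (x₀ + δ), |deriv (deriv F) x| ≤ M)
    (hFG : |F (x₀ + δ) - G (x₀ + δ)| ≤ M') (hsmall : M' ≤ ε ^ 2 / (4 * M)) :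
    0 < G (x₀ + δ) * (deriv F x₀ * δ) := by
  have hεh : 0 < ε * (ε / M) := by positivity
  have htaylor : |F (x₀ + δ) - deriv F x₀ * δ| ≤ ε * (ε / M) / 2 := by
    have := abs_sub_taylor_one_le hF hF''
    rwa [hFx₀, sub_zero, add_sub_cancel_left, ← sq_abs, hδ,
      show M * (ε / M) ^ 2 = ε * (ε / M) by field_simp] at this
  have hM' : M' ≤ ε * (ε / M) / 4 := hsmall.trans_eq (by ring)
  have htangent : ε * (ε / M) ≤ |deriv F x₀ * δ| := by
    rw [abs_mul, hδ]
    gcongr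
  apply mul_pos_of_abs_sub_lt_abs
  calc |G (x₀ + δ) - deriv F x₀ * δ|
      ≤ |G (x₀ + δ) - F (x₀ + δ)| + |F (x₀ + δ) - deriv F x₀ * δ| := abs_sub_le _ _ _
    _ < ε * (ε / M) := by rw [abs_sub_comm]; linarith
    _ ≤ |deriv F x₀ * δ| := htangent

theorem root_comparison_general
    (F G : ℝ → ℝ)
    (hF : ContDiff ℝ 2 F)
    (hG : Continuous G)
    (ε₁ M M' : ℝ) (hε₁ : 0 < ε₁) (hM : 0 < M)
    (x₀ : ℝ)
    (hFx₀ : F x₀ = 0)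
    (hF' : ε₁ ≤ |deriv F x₀|)
    (hF'' : ∀ x ∈ Set.Icc (x₀ - ε₁ / M) (x₀ + ε₁ / M), |deriv (deriv F) x| ≤ M)
    (hFG : ∀ x ∈ Set.Icc (x₀ - ε₁ / M) (x₀ + ε₁ / M), |F x - G x| ≤ M')
    (hsmall : M' ≤ ε₁ ^ 2 / (4 * M)) :
    ∃ y ∈ Set.Icc (x₀ - ε₁ / M) (x₀ + ε₁ / M), G y = 0 := by
  set h := ε₁ / M
  have hh : 0 < h := by positivity
  have hsign : ∀ δ, |δ| = h → 0 < G (x₀ + δ) * (deriv F x₀ * δ) := by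
    intro δ hδ
    obtain ⟨hδ₁, hδ₂⟩ := abs_le.mp hδ.le
    have hsub : uIcc x₀ (x₀ + δ) ⊆ Icc (x₀ - h) (x₀ + h) :=
      uIcc_subset_Icc ⟨by linarith, by linarith⟩ ⟨by linarith, by linarith⟩
    exact mul_tangent_pos_of_abs_sub_le hF hε₁ hM hδ hFx₀ hF'
      (fun x hx ↦ hF'' x (hsub hx)) (hFG _ (hsub right_mem_uIcc)) hsmall
  have hleft := hsign (-h) (by rw [abs_neg, abs_of_pos hh])
  have hright := hsign h (abs_of_pos hh)
  have hopposite : G (x₀ + -h) * G (x₀ + h) ≤ 0 := by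
    have : G (x₀ + -h) * G (x₀ + h) * (deriv F x₀ * h) ^ 2 < 0 := by nlinarith
    exact (neg_of_mul_neg_left this (sq_nonneg _)).le
  obtain ⟨y, hy, hy0⟩ := exists_mem_uIcc_eq_zero_of_mul_nonpos hG.continuousOn hopposite
  rw [uIcc_of_le (by linarith), ← sub_eq_add_neg] at hy
  exact ⟨y, hy, hy0⟩

/-- **Deterministic root comparison.**
If `F` is `C²`, `G` is continuous, `F(x₀) = 0`, `|F'(x₀)| ≥ ε₁`, `|F''| ≤ M` on
`I = [x₀ − ε₁/M, x₀ + ε₁/M]`, and `sup_I |F − G| ≤ M'` with `M' ≤ ε₁²/(4M)`, then `G`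
has a root in `I`. -/
theorem root_comparison
    (F G : ℝ → ℝ)
    (hF : ContDiff ℝ 2 F)
    (hG : Continuous G)
    (ε₁ M M' : ℝ) (hε₁ : 0 < ε₁) (hM : 0 < M) (hM' : 0 < M')
    (x₀ : ℝ)
    (hFx₀ : F x₀ = 0)
    (hF' : ε₁ ≤ |deriv F x₀|)
    (hF'' : ∀ x ∈ Set.Icc (x₀ - ε₁ / M) (x₀ + ε₁ / M), |deriv (deriv F) x| ≤ M)
    (hFG : ∀ x ∈ Set.Icc (x₀ - ε₁ / M) (x₀ + ε₁ / M), |F x - G x| ≤ M')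
    (hsmall : M' ≤ ε₁ ^ 2 / (4 * M)) :
    ∃ y ∈ Set.Icc (x₀ - ε₁ / M) (x₀ + ε₁ / M), G y = 0 :=
  root_comparison_general F G hF hG ε₁ M M' hε₁ hM x₀ hFx₀ hF' hF'' hFG hsmall
end
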